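/- arXiv:2212.00064 — 2 statements merged into one kernel-verified Lean document; each statement's English description precedes it below -/
import Mathlib

section
/- Let ρ : ℝ → ℝ be a smooth even function, decaying together with all its derivatives like a polynomial times e^{-|x|}, which satisfies −ρ'' + ρ − 5Q⁴ρ = (x²/4)Q on ℝ. Then ∫_ℝ ρ(x) Q(x) dx = (1/8) ∫_ℝ x² Q(x)² dx; in particular ∫_ℝ ρ Q > 0. -/
/-!
`u_λ(x) = λ^{1/2} Q(λx)` solves `-u'' + λ²u = u⁵`; differentiating at `λ = 1` shows that
`ΛQ = Q/2 + xQ'` satisfies `L₊ΛQ = -2Q`. As `L₊` is symmetric,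
`-2∫ρQ = ∫ρ L₊ΛQ = ∫(L₊ρ) ΛQ = ∫(x²/4) Q (Q/2 + xQ') = (1/8 - 3/8)∫x²Q²`,
using `∫x³QQ' = -(3/2)∫x²Q²`. Both integrations by parts are done at once with an explicit
antiderivative of `x²Q²/4 - 2ρQ`; it is integrable because `ρ`, `Q` and their derivatives decay
like a polynomial times `e^{-|x|}`, so its boundary terms vanish.
-/

open scoped ContDiff

/-- The ground state `Q(x) = 3^(1/4) (cosh 2x)^(-1/2)`, the positive even `H¹` solution of
`-Q'' + Q = Q⁵` on `ℝ`. -/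
noncomputable def Q (x : ℝ) : ℝ :=
  (3 : ℝ) ^ ((1 : ℝ) / 4) * Real.cosh (2 * x) ^ (-(1 : ℝ) / 2)

open Real Filter Topology MeasureTheory Asymptotics

def PolyExpDecay (a : ℝ) (f : ℝ → ℝ) : Prop :=
  ∃ C : ℝ, ∃ n : ℕ, ∀ x, |f x| ≤ C * (1 + x ^ 2) ^ n * exp (-a * |x|)

lemma one_le_one_add_sq (x : ℝ) : (1 : ℝ) ≤ 1 + x ^ 2 := le_add_of_nonneg_right (sq_nonneg x)

namespace PolyExpDecay

variable {a b : ℝ} {f g : ℝ → ℝ}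

lemma const_nonneg {C : ℝ} {n : ℕ} (h : ∀ x, |f x| ≤ C * (1 + x ^ 2) ^ n * exp (-a * |x|)) :
    0 ≤ C := by
  simpa using (abs_nonneg _).trans (h 0)

lemma congr (hf : PolyExpDecay a f) (hfg : ∀ x, f x = g x) : PolyExpDecay a g := by
  simpa only [funext hfg] using hf

lemma add (hf : PolyExpDecay a f) (hg : PolyExpDecay a g) :
    PolyExpDecay a (fun x => f x + g x) := by
  obtain ⟨C, n, hC⟩ := hf
  obtain ⟨D, m, hD⟩ := hg
  refine ⟨C + D, n + m, fun x => ?_⟩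
  have hP := one_le_one_add_sq x
  have hf' : |f x| ≤ C * (1 + x ^ 2) ^ (n + m) * exp (-a * |x|) :=
    (hC x).trans (by have := const_nonneg hC; gcongr; omega)
  have hg' : |g x| ≤ D * (1 + x ^ 2) ^ (n + m) * exp (-a * |x|) :=
    (hD x).trans (by have := const_nonneg hD; gcongr; omega)
  calc |f x + g x| ≤ |f x| + |g x| := abs_add_le _ _
    _ ≤ (C + D) * (1 + x ^ 2) ^ (n + m) * exp (-a * |x|) := by linarith

lemma neg (hf : PolyExpDecay a f) : PolyExpDecay a (fun x => -f x) := by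
  obtain ⟨C, n, h⟩ := hf
  exact ⟨C, n, fun x => by simpa only [abs_neg] using h x⟩

lemma sub (hf : PolyExpDecay a f) (hg : PolyExpDecay a g) :
    PolyExpDecay a (fun x => f x - g x) :=
  (hf.add hg.neg).congr fun _ => (sub_eq_add_neg _ _).symm

lemma mul (hf : PolyExpDecay a f) (hg : PolyExpDecay b g) :
    PolyExpDecay (a + b) (fun x => f x * g x) := by
  obtain ⟨C, n, hC⟩ := hf
  obtain ⟨D, m, hD⟩ := hg
  refine ⟨C * D, n + m, fun x => ?_⟩
  rw [abs_mul]
  calc |f x| * |g x|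
      ≤ (C * (1 + x ^ 2) ^ n * exp (-a * |x|)) * (D * (1 + x ^ 2) ^ m * exp (-b * |x|)) :=
      mul_le_mul (hC x) (hD x) (abs_nonneg _) ((abs_nonneg _).trans (hC x))
    _ = C * D * (1 + x ^ 2) ^ (n + m) * exp (-(a + b) * |x|) := by
      rw [pow_add, neg_add, add_mul, exp_add]
      ring

lemma bdd_mul (hf : PolyExpDecay a f) {M : ℝ} (hg : ∀ x, |g x| ≤ M) :
    PolyExpDecay a (fun x => g x * f x) := by
  simpa using (PolyExpDecay.mul (a := 0) ⟨M, 0, by simpa using hg⟩ hf)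

lemma const_mul (hf : PolyExpDecay a f) (c : ℝ) : PolyExpDecay a (fun x => c * f x) :=
  hf.bdd_mul (g := fun _ => c) fun _ => le_rfl

lemma pow_mul (hf : PolyExpDecay a f) (k : ℕ) : PolyExpDecay a (fun x => x ^ k * f x) := by
  obtain ⟨C, n, hC⟩ := hf
  refine ⟨C, k + n, fun x => ?_⟩
  have hx : |x| ≤ 1 + x ^ 2 := by nlinarith [sq_abs x, sq_nonneg (|x| - 1)]
  rw [abs_mul, abs_pow, pow_add]
  calc |x| ^ k * |f x| ≤ (1 + x ^ 2) ^ k * (C * (1 + x ^ 2) ^ n * exp (-a * |x|)) := by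
        gcongr
        exact hC x
    _ = _ := by ring

lemma tendsto_cocompact (hf : PolyExpDecay a f) (ha : 0 < a) :
    Tendsto f (cocompact ℝ) (𝓝 0) := by
  obtain ⟨C, n, hC⟩ := hf
  have hpoly : Tendsto (fun t : ℝ => C * (1 + t ^ 2) ^ n * exp (-a * t)) atTop (𝓝 0) := by
    have := (Polynomial.tendsto_div_exp_atTop
      (Polynomial.C C * (1 + (Polynomial.C a⁻¹ * Polynomial.X) ^ 2) ^ n)).comp
      (tendsto_id.const_mul_atTop ha)
    refine this.congr fun t => ?_
    simp [neg_mul, exp_neg, div_eq_mul_inv, ha.ne']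
  refine squeeze_zero_norm (fun x => ?_) (hpoly.comp tendsto_norm_cocompact_atTop)
  simpa [Real.norm_eq_abs, sq_abs] using hC x

lemma integrable (hf : PolyExpDecay a f) (ha : 0 < a) (hc : Continuous f) : Integrable f := by
  have hlim := ((hf.add (hf.pow_mul 2)).congr fun x => (one_add_mul _ _).symm).tendsto_cocompact ha
  refine hc.locallyIntegrable.integrable_of_isBigO_cocompact ?_
    (integrable_inv_one_add_sq.integrableAtFilter _)
  refine ((hlim.isBigO_one ℝ).mul (isBigO_refl (fun x : ℝ => (1 + x ^ 2)⁻¹) _)).congr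
    (fun x => ?_) (fun x => one_mul _)
  field_simp [(zero_lt_one.trans_le (one_le_one_add_sq x)).ne']

lemma of_rpow_bound {C : ℝ} {q : ℕ}
    (h : ∀ x, |f x| ≤ C * (1 + x ^ 2) ^ ((q : ℝ) / 2) * exp (-|x|)) : PolyExpDecay 1 f := by
  have hC : 0 ≤ C := by simpa using (abs_nonneg _).trans (h 0)
  refine ⟨C, q, fun x => (h x).trans ?_⟩
  have hpow : (1 + x ^ 2) ^ ((q : ℝ) / 2) ≤ (1 + x ^ 2) ^ q := by
    rw [← rpow_natCast (1 + x ^ 2) q]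
    exact rpow_le_rpow_of_exponent_le (one_le_one_add_sq x)
      (half_le_self (Nat.cast_nonneg q))
  rw [neg_mul, one_mul]
  gcongr

end PolyExpDecay

lemma hasDerivAt_tanh (x : ℝ) : HasDerivAt tanh (1 / cosh x ^ 2) x := by
  have h := (hasDerivAt_sinh x).div (hasDerivAt_cosh x) (cosh_pos x).ne'
  rw [show tanh = sinh / cosh from funext fun _ => tanh_eq_sinh_div_cosh _]
  refine h.congr_deriv ?_
  rw [← cosh_sq_sub_sinh_sq x]
  ring

lemma Q_pos (x : ℝ) : 0 < Q x := by unfold Q; positivity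

lemma Q_pow_four (x : ℝ) : Q x ^ 4 = 3 / cosh (2 * x) ^ 2 := by
  have hc := (cosh_pos (2 * x)).le
  rw [Q, mul_pow, ← rpow_natCast, ← rpow_natCast, ← rpow_mul (by norm_num), ← rpow_mul hc]
  norm_num [rpow_neg hc, div_eq_mul_inv]

lemma Q_pow_four_le (x : ℝ) : Q x ^ 4 ≤ 3 := by
  rw [Q_pow_four]
  exact div_le_self (by norm_num) (one_le_pow₀ (one_le_cosh _))

lemma Q_le_two_mul_exp (x : ℝ) : Q x ≤ 2 * exp (-|x|) := by
  have hcosh : exp (2 * |x|) / 2 ≤ cosh (2 * x) := by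
    rw [← cosh_abs, abs_mul, abs_two, cosh_eq]
    linarith [exp_pos (-(2 * |x|))]
  refine (pow_le_pow_iff_left₀ (Q_pos x).le (by positivity) four_ne_zero).1 ?_
  have hexp : (2 * exp (-|x|)) ^ 4 = 16 / exp (2 * |x|) ^ 2 := by
    rw [eq_div_iff (by positivity), mul_pow, mul_assoc, ← exp_nat_mul, ← exp_nat_mul,
      ← exp_add]
    norm_num
    ring
  rw [Q_pow_four, hexp]
  calc 3 / cosh (2 * x) ^ 2 ≤ 3 / (exp (2 * |x|) / 2) ^ 2 := by gcongr
    _ ≤ 16 / exp (2 * |x|) ^ 2 := by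
      rw [div_pow, div_div_eq_mul_div]
      gcongr
      norm_num

noncomputable def Q' (x : ℝ) : ℝ := -tanh (2 * x) * Q x

lemma hasDerivAt_Q (x : ℝ) : HasDerivAt Q (Q' x) x := by
  have hc := (cosh_pos (2 * x))
  have h := (((hasDerivAt_cosh (2 * x)).comp x ((hasDerivAt_id x).const_mul 2)).rpow_const
    (p := -(1:ℝ)/2) (Or.inl hc.ne')).const_mul ((3 : ℝ) ^ ((1 : ℝ) / 4))
  refine h.congr_deriv ?_
  simp only [Function.comp_apply]
  rw [Q', Q, tanh_eq_sinh_div_cosh, rpow_sub_one hc.ne']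
  field_simp

lemma hasDerivAt_Q' (x : ℝ) : HasDerivAt Q' (Q x - Q x ^ 5) x := by
  have h := (((hasDerivAt_tanh (2 * x)).comp x ((hasDerivAt_id x).const_mul 2)).neg).mul
    (hasDerivAt_Q x)
  refine h.congr_deriv ?_
  have hc := (cosh_pos (2 * x)).ne'
  simp only [Function.comp_apply, Pi.neg_apply]
  rw [Q', show Q x ^ 5 = Q x ^ 4 * Q x by ring, Q_pow_four, tanh_eq_sinh_div_cosh]
  field_simp
  linear_combination (-Q x) * cosh_sq_sub_sinh_sq (2 * x)

lemma abs_Q'_le (x : ℝ) : |Q' x| ≤ Q x := by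
  rw [Q', abs_mul, abs_neg, abs_of_pos (Q_pos x)]
  exact mul_le_of_le_one_left (Q_pos x).le (abs_tanh_lt_one _).le

lemma polyExpDecay_Q : PolyExpDecay 1 Q :=
  ⟨2, 0, fun x => by simpa [abs_of_pos (Q_pos x)] using Q_le_two_mul_exp x⟩

lemma polyExpDecay_Q' : PolyExpDecay 1 Q' := by
  obtain ⟨C, n, h⟩ := polyExpDecay_Q
  exact ⟨C, n, fun x => (abs_Q'_le x).trans ((le_abs_self _).trans (h x))⟩

@[fun_prop]
lemma continuous_Q : Continuous Q :=
  continuous_iff_continuousAt.2 fun x => (hasDerivAt_Q x).continuousAt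

noncomputable def ΛQ (x : ℝ) : ℝ := Q x / 2 + x * Q' x

noncomputable def ΛQ' (x : ℝ) : ℝ := 3 / 2 * Q' x + x * (Q x - Q x ^ 5)

lemma hasDerivAt_ΛQ (x : ℝ) : HasDerivAt ΛQ (ΛQ' x) x := by
  have h := ((hasDerivAt_Q x).div_const 2).add ((hasDerivAt_id x).mul (hasDerivAt_Q' x))
  refine h.congr_deriv ?_
  simp only [ΛQ', id_eq]
  ring

lemma hasDerivAt_ΛQ' (x : ℝ) : HasDerivAt ΛQ' ((1 - 5 * Q x ^ 4) * ΛQ x + 2 * Q x) x := by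
  have h := ((hasDerivAt_Q' x).const_mul (3 / 2)).add
    ((hasDerivAt_id x).mul ((hasDerivAt_Q x).sub ((hasDerivAt_Q x).pow 5)))
  refine h.congr_deriv ?_
  simp only [ΛQ, id_eq, Pi.sub_apply, Pi.pow_apply, Nat.cast_ofNat]
  ring

lemma polyExpDecay_ΛQ : PolyExpDecay 1 ΛQ :=
  ((polyExpDecay_Q.const_mul (1 / 2)).add (polyExpDecay_Q'.pow_mul 1)).congr fun x => by
    rw [ΛQ, pow_one]; ring

lemma polyExpDecay_ΛQ' : PolyExpDecay 1 ΛQ' := by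
  have hQ5 : PolyExpDecay 1 fun x => Q x ^ 4 * Q x :=
    polyExpDecay_Q.bdd_mul fun x => by
      rw [abs_of_nonneg (by positivity)]; exact Q_pow_four_le x
  refine ((polyExpDecay_Q'.const_mul (3 / 2)).add ((polyExpDecay_Q.sub hQ5).pow_mul 1)).congr
    fun x => ?_
  rw [ΛQ', pow_one]
  ring

lemma hasDerivAt_wronskian {f f' g g' : ℝ → ℝ} {x f'' g'' : ℝ} (hf : HasDerivAt f (f' x) x)
    (hf' : HasDerivAt f' f'' x) (hg : HasDerivAt g (g' x) x) (hg' : HasDerivAt g' g'' x) :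
    HasDerivAt (fun x => f' x * g x - f x * g' x) (f'' * g x - f x * g'') x :=
  ((hf'.mul hg).sub (hf.mul hg')).congr_deriv (by ring)

lemma integrable_sq_mul_Q_sq : Integrable fun x : ℝ => x ^ 2 * Q x ^ 2 :=
  (((polyExpDecay_Q.mul polyExpDecay_Q).pow_mul 2).congr fun x => by ring).integrable
    (by norm_num) (by fun_prop)

lemma integral_sq_mul_Q_sq_pos : 0 < ∫ x, x ^ 2 * Q x ^ 2 := by
  rw [integral_pos_iff_support_of_nonneg (fun x => by positivity) integrable_sq_mul_Q_sq]
  refine (Measure.measure_Ioi_pos volume (0 : ℝ)).trans_le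
    (measure_mono fun x (hx : 0 < x) => ?_)
  exact (mul_pos (pow_pos hx 2) (pow_pos (Q_pos x) 2)).ne'

section

variable {ρ ρ' ρ'' : ℝ → ℝ}

-- `ρ''ΛQ - ρ(ΛQ)'' = ρ L₊ΛQ - (L₊ρ) ΛQ = -2ρQ - (x²/4) Q ΛQ`;
-- the term `x³Q²/8` absorbs its `x³QQ'` part.
lemma hasDerivAt_wronskian_ΛQ (hρ : ∀ x, HasDerivAt ρ (ρ' x) x)
    (hρ' : ∀ x, HasDerivAt ρ' (ρ'' x) x)
    (heq : ∀ x, -ρ'' x + ρ x - 5 * Q x ^ 4 * ρ x = x ^ 2 / 4 * Q x) (x : ℝ) :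
    HasDerivAt (fun x => ρ' x * ΛQ x - ρ x * ΛQ' x + x ^ 3 * Q x ^ 2 / 8)
      (x ^ 2 * Q x ^ 2 / 4 - 2 * (ρ x * Q x)) x := by
  refine ((hasDerivAt_wronskian (hρ x) (hρ' x) (hasDerivAt_ΛQ x) (hasDerivAt_ΛQ' x)).add
    (((hasDerivAt_pow 3 x).mul ((hasDerivAt_Q x).pow 2)).div_const 8)).congr_deriv ?_
  simp only [ΛQ, Pi.pow_apply, Nat.cast_ofNat]
  linear_combination (-(Q x / 2 + x * Q' x)) * heq x

lemma integral_mul_Q_eq (hρ : ∀ x, HasDerivAt ρ (ρ' x) x)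
    (hρ' : ∀ x, HasDerivAt ρ' (ρ'' x) x)
    (heq : ∀ x, -ρ'' x + ρ x - 5 * Q x ^ 4 * ρ x = x ^ 2 / 4 * Q x)
    (hρ_decay : PolyExpDecay 1 ρ) (hρ'_decay : PolyExpDecay 1 ρ') :
    ∫ x, ρ x * Q x = 1 / 8 * ∫ x, x ^ 2 * Q x ^ 2 := by
  have hG := hasDerivAt_wronskian_ΛQ hρ hρ' heq
  have hρQ : Integrable fun x => ρ x * Q x :=
    (hρ_decay.mul polyExpDecay_Q).integrable (by norm_num)
      (continuous_iff_continuousAt.2 fun x => (hρ x).continuousAt.mul continuous_Q.continuousAt)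
  have hGint : Integrable fun x => ρ' x * ΛQ x - ρ x * ΛQ' x + x ^ 3 * Q x ^ 2 / 8 :=
    ((((hρ'_decay.mul polyExpDecay_ΛQ).sub (hρ_decay.mul polyExpDecay_ΛQ')).add
      (((polyExpDecay_Q.mul polyExpDecay_Q).pow_mul 3).const_mul (1 / 8))).congr
        fun x => by ring).integrable
      (by norm_num) (continuous_iff_continuousAt.2 fun x => (hG x).continuousAt)
  have hzero := integral_eq_zero_of_hasDerivAt_of_integrable hG
    ((integrable_sq_mul_Q_sq.div_const 4).sub (hρQ.const_mul 2)) hGint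
  rw [integral_sub (integrable_sq_mul_Q_sq.div_const 4) (hρQ.const_mul 2), integral_div,
    integral_const_mul] at hzero
  linarith

end

theorem rho_Q_inner_product_general (ρ : ℝ → ℝ) (hsm : ContDiff ℝ ∞ ρ)
    (hdecay : ∃ q : ℕ, ∀ p : ℕ, ∃ C : ℝ, 0 < C ∧ ∀ x : ℝ,
      |iteratedDeriv p ρ x| ≤ C * (1 + x ^ 2) ^ ((q : ℝ) / 2) * Real.exp (-|x|))
    (heq : ∀ x : ℝ, -(deriv (deriv ρ) x) + ρ x - 5 * (Q x) ^ 4 * ρ x = x ^ 2 / 4 * Q x) :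
    (∫ x : ℝ, ρ x * Q x) = (1 / 8 : ℝ) * (∫ x : ℝ, x ^ 2 * (Q x) ^ 2) ∧
      0 < ∫ x : ℝ, ρ x * Q x := by
  obtain ⟨q, hq⟩ := hdecay
  have hdecay_deriv (p : ℕ) : PolyExpDecay 1 (iteratedDeriv p ρ) :=
    let ⟨_, _, hC⟩ := hq p; .of_rpow_bound hC
  have hρ (x : ℝ) : HasDerivAt ρ (deriv ρ x) x := (hsm.differentiable (by simp) x).hasDerivAt
  have hρ' (x : ℝ) : HasDerivAt (deriv ρ) (deriv (deriv ρ) x) x :=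
    ((contDiff_infty_iff_deriv.1 hsm).2.differentiable (by simp) x).hasDerivAt
  have hmain := integral_mul_Q_eq hρ hρ' heq (by simpa using hdecay_deriv 0)
    (by simpa using hdecay_deriv 1)
  exact ⟨hmain, by rw [hmain]; linarith [integral_sq_mul_Q_sq_pos]⟩

/-- If `ρ` is a smooth even function decaying, together with all its derivatives, like a
polynomial times `e^{-|x|}`, and `L₊ρ = (x²/4)Q` (i.e. `−ρ'' + ρ − 5Q⁴ρ = (x²/4)Q`),
then `∫ρQ = (1/8)∫x²Q²`; in particular `∫ρQ > 0`. -/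
theorem rho_Q_inner_product (ρ : ℝ → ℝ) (hsm : ContDiff ℝ ∞ ρ)
    (heven : ∀ x, ρ (-x) = ρ x)
    (hdecay : ∃ q : ℕ, ∀ p : ℕ, ∃ C : ℝ, 0 < C ∧ ∀ x : ℝ,
      |iteratedDeriv p ρ x| ≤ C * (1 + x ^ 2) ^ ((q : ℝ) / 2) * Real.exp (-|x|))
    (heq : ∀ x : ℝ, -(deriv (deriv ρ) x) + ρ x - 5 * (Q x) ^ 4 * ρ x = x ^ 2 / 4 * Q x) :
    (∫ x : ℝ, ρ x * Q x) = (1 / 8 : ℝ) * (∫ x : ℝ, x ^ 2 * (Q x) ^ 2) ∧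
      0 < ∫ x : ℝ, ρ x * Q x :=
  rho_Q_inner_product_general ρ hsm hdecay heq
end

section
/- Let m > 0, and let P₁, P₂, P₃, P₄ : ℝ → ℝ be continuous functions such that there exist C > 0 and δ > 0 with |P_j(x)| ≤ C e^{−(2m+δ)x} for all x ≥ 0 and j = 1,2,3,4. If u, v ∈ C²(ℝ, ℝ) satisfy −u'' + m²u + P₁u + P₂v = 0 and −v'' + P₃u + P₄v = 0 on ℝ, then there exist constants c, d₀, d₁ ∈ ℝ and C' > 0 such that for all x ≥ 0: |u(x) − c e^{mx}| ≤ C' e^{−mx} and |v(x) − d₀ − d₁x| ≤ C' e^{−mx}. -/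
/-!
For `E = m²u² + u'² + m²v² + v'²`, completing squares gives
`E' ≤ (2m + (2C/m) e^{-(2m+δ)x}) E`; the excess over the rate `2m` is integrable, so
`E = O(e^{2mx})` and `u, v = O(e^{mx})`. The forcing terms `P₁u + P₂v` and `P₃u + P₄v` are
therefore `O(e^{-(m+δ)x})`.

The asymptotics then all come from one fact: if `|w'| ≤ A e^{-νx}` on `[0, ∞)`, then `w` has a
limit `L` with `|w - L| ≤ (A/ν) e^{-νx}`, since `w ∓ (A/ν) e^{-νx}` are monotone in opposite
directions. For `v` apply it to `v'` and then to `v - d₁x`. For `u` apply it to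
`e^{-mx}(u' + mu)`, whose derivative is `e^{-mx}(P₁u + P₂v)`, and then to `e^{mx}(u - c e^{mx})`.
-/

open Real Set

namespace OdeAsymptotics

lemma monotoneOn_Ici_of_hasDerivAt_nonneg {f f' : ℝ → ℝ} {a : ℝ}
    (hf : ∀ x, HasDerivAt f (f' x) x) (hf' : ∀ x, a < x → 0 ≤ f' x) : MonotoneOn f (Ici a) :=
  monotoneOn_of_hasDerivWithinAt_nonneg (convex_Ici a) (HasDerivAt.continuousOn fun x _ => hf x)
    (fun x _ => (hf x).hasDerivWithinAt) (by simpa using hf')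

lemma antitoneOn_Ici_of_hasDerivAt_nonpos {f f' : ℝ → ℝ} {a : ℝ}
    (hf : ∀ x, HasDerivAt f (f' x) x) (hf' : ∀ x, a < x → f' x ≤ 0) : AntitoneOn f (Ici a) :=
  antitoneOn_of_hasDerivWithinAt_nonpos (convex_Ici a) (HasDerivAt.continuousOn fun x _ => hf x)
    (fun x _ => (hf x).hasDerivWithinAt) (by simpa using hf')

lemma hasDerivAt_exp_mul (k t : ℝ) : HasDerivAt (fun s => exp (k * s)) (k * exp (k * t)) t := by
  simpa [mul_comm] using ((hasDerivAt_id t).const_mul k).exp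

lemma hasDerivAt_exp_neg_mul (k t : ℝ) :
    HasDerivAt (fun s => exp (-(k * s))) (-(k * exp (-(k * t)))) t := by
  simpa using hasDerivAt_exp_mul (-k) t

theorem exists_abs_sub_le_of_abs_deriv_le_exp {w w' : ℝ → ℝ} {A ν : ℝ} (hν : 0 < ν)
    (hw : ∀ x, HasDerivAt w (w' x) x) (hw' : ∀ x, 0 ≤ x → |w' x| ≤ A * exp (-(ν * x))) :
    ∃ L, ∀ x, 0 ≤ x → |w x - L| ≤ A / ν * exp (-(ν * x)) := by
  set r : ℝ → ℝ := fun t => A / ν * exp (-(ν * t))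
  have hr : ∀ t, HasDerivAt r (-(A * exp (-(ν * t)))) t := fun t =>
    ((hasDerivAt_exp_neg_mul ν t).const_mul (A / ν)).congr_deriv (by field_simp)
  have hr_nonneg : ∀ t, 0 ≤ r t := fun t => by
    have hA : 0 ≤ A := by simpa using (abs_nonneg _).trans (hw' 0 le_rfl)
    positivity
  have hlower : MonotoneOn (fun t => w t - r t) (Ici 0) :=
    monotoneOn_Ici_of_hasDerivAt_nonneg (fun t => (hw t).sub (hr t))
      fun t ht => by linarith [(abs_le.1 (hw' t ht.le)).1]
  have hupper : AntitoneOn (fun t => w t + r t) (Ici 0) :=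
    antitoneOn_Ici_of_hasDerivAt_nonpos (fun t => (hw t).add (hr t))
      fun t ht => by linarith [(abs_le.1 (hw' t ht.le)).2]
  have hsep : ∀ t ∈ Ici (0 : ℝ), ∀ x ∈ Ici (0 : ℝ), w t - r t ≤ w x + r x := by
    intro t ht x hx
    rcases le_total t x with htx | hxt
    · linarith [hlower ht hx htx, hr_nonneg x]
    · linarith [hupper hx ht hxt, hr_nonneg t]
  have hbdd : BddAbove ((fun t => w t - r t) '' Ici 0) :=
    ⟨w 0 + r 0, forall_mem_image.2 fun t ht => hsep t ht 0 (mem_Ici.2 le_rfl)⟩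
  refine ⟨sSup ((fun t => w t - r t) '' Ici 0), fun x hx => abs_sub_le_iff.2 ⟨?_, ?_⟩⟩
  · linarith [le_csSup hbdd (mem_image_of_mem _ (mem_Ici.2 hx))]
  · have := csSup_le (nonempty_Ici.image _) (forall_mem_image.2 fun t ht => hsep t ht x hx)
    linarith

lemma abs_mul_add_mul_le {p q a b M : ℝ} (hp : |p| ≤ M) (hq : |q| ≤ M) :
    |p * a + q * b| ≤ M * (|a| + |b|) := by
  rw [mul_add]
  refine (abs_add_le _ _).trans (add_le_add ?_ ?_) <;> rw [abs_mul] <;> gcongr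

theorem le_mul_exp_of_hasDerivAt_le {E E' : ℝ → ℝ} {a K ν : ℝ} (hK : 0 ≤ K) (hν : 0 < ν)
    (hE0 : 0 ≤ E 0) (hE : ∀ x, HasDerivAt E (E' x) x)
    (hE' : ∀ x, 0 ≤ x → E' x ≤ (a + K * exp (-(ν * x))) * E x) {x : ℝ} (hx : 0 ≤ x) :
    E x ≤ E 0 * exp (K / ν) * exp (a * x) := by
  set φ : ℝ → ℝ := fun t => K / ν * exp (-(ν * t)) - a * t
  have hφ : ∀ t, HasDerivAt φ (-(a + K * exp (-(ν * t)))) t := fun t =>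
    (((hasDerivAt_exp_neg_mul ν t).const_mul (K / ν)).sub
      ((hasDerivAt_id t).const_mul a)).congr_deriv (by field_simp; ring)
  have hG : AntitoneOn (fun t => E t * exp (φ t)) (Ici 0) :=
    antitoneOn_Ici_of_hasDerivAt_nonpos (fun t => (hE t).mul (hφ t).exp) fun t ht => by
      nlinarith [mul_le_mul_of_nonneg_left (hE' t ht.le) (exp_pos (φ t)).le]
  have hGx : E x * exp (φ x) ≤ E 0 * exp (K / ν) := by
    simpa [φ] using hG (mem_Ici.2 le_rfl) (mem_Ici.2 hx) hx
  rcases le_or_gt (E x) 0 with hneg | hpos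
  · exact hneg.trans (by positivity)
  · have hφx : -(a * x) ≤ φ x := by
      simp only [φ]; linarith [show 0 ≤ K / ν * exp (-(ν * x)) by positivity]
    calc E x = E x * exp (-(a * x)) * exp (a * x) := by rw [mul_assoc, ← exp_add]; simp
      _ ≤ E x * exp (φ x) * exp (a * x) := by gcongr
      _ ≤ E 0 * exp (K / ν) * exp (a * x) := by gcongr

lemma energy_deriv_le {m p u u' v v' F G : ℝ} (hm : 0 < m) (hp : 0 ≤ p)
    (hF : |F| ≤ p * (|u| + |v|)) (hG : |G| ≤ p * (|u| + |v|)) :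
    2 * (m ^ 2 * u * u' + u' * (m ^ 2 * u + F) + m ^ 2 * v * v' + v' * G) ≤
      (2 * m + 2 * p / m) * (m ^ 2 * u ^ 2 + u' ^ 2 + m ^ 2 * v ^ 2 + v' ^ 2) := by
  set E := m ^ 2 * u ^ 2 + u' ^ 2 + m ^ 2 * v ^ 2 + v' ^ 2
  have hmass : 4 * m ^ 2 * u * u' + 2 * m ^ 2 * v * v' ≤ 2 * m * E := by
    nlinarith [mul_nonneg hm.le (sq_nonneg (m * u - u')), mul_nonneg hm.le (sq_nonneg (m * v - v')),
      mul_nonneg hm.le (add_nonneg (sq_nonneg (m * v)) (sq_nonneg v'))]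
  have hF' : u' * F ≤ |u'| * (p * (|u| + |v|)) :=
    (le_abs_self _).trans (by rw [abs_mul]; gcongr)
  have hG' : v' * G ≤ |v'| * (p * (|u| + |v|)) :=
    (le_abs_self _).trans (by rw [abs_mul]; gcongr)
  have hamgm : m * ((|u| + |v|) * (|u'| + |v'|)) ≤ E := by
    nlinarith [sq_nonneg (m * (|u| + |v|) - (|u'| + |v'|)), sq_nonneg (|u| - |v|),
      sq_nonneg (|u'| - |v'|), sq_abs u, sq_abs u', sq_abs v, sq_abs v']
  have hcoupling : 2 * (u' * F + v' * G) ≤ 2 * p / m * E :=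
    calc 2 * (u' * F + v' * G) ≤ 2 * p / m * (m * ((|u| + |v|) * (|u'| + |v'|))) := by
          field_simp; linarith
      _ ≤ 2 * p / m * E := by gcongr
  linarith

theorem exists_abs_add_abs_le_mul_exp {m C ν : ℝ} (hm : 0 < m) (hC : 0 ≤ C) (hν : 0 < ν)
    {u u' v v' f g : ℝ → ℝ}
    (hu : ∀ x, HasDerivAt u (u' x) x) (hu' : ∀ x, HasDerivAt u' (m ^ 2 * u x + f x) x)
    (hv : ∀ x, HasDerivAt v (v' x) x) (hv' : ∀ x, HasDerivAt v' (g x) x)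
    (hf : ∀ x, 0 ≤ x → |f x| ≤ C * exp (-(ν * x)) * (|u x| + |v x|))
    (hg : ∀ x, 0 ≤ x → |g x| ≤ C * exp (-(ν * x)) * (|u x| + |v x|)) :
    ∃ B, 0 ≤ B ∧ ∀ x, 0 ≤ x → |u x| + |v x| ≤ B * exp (m * x) := by
  set E : ℝ → ℝ := fun t => m ^ 2 * u t ^ 2 + u' t ^ 2 + m ^ 2 * v t ^ 2 + v' t ^ 2
  set E' : ℝ → ℝ := fun t =>
    2 * (m ^ 2 * u t * u' t + u' t * (m ^ 2 * u t + f t) + m ^ 2 * v t * v' t + v' t * g t)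
  have hE : ∀ t, HasDerivAt E (E' t) t := fun t => by
    refine (((((hu t).pow 2).const_mul (m ^ 2)).add ((hu' t).pow 2)).add
      (((hv t).pow 2).const_mul (m ^ 2))).add ((hv' t).pow 2) |>.congr_deriv ?_
    ring
  have hE' : ∀ t, 0 ≤ t → E' t ≤ (2 * m + 2 * C / m * exp (-(ν * t))) * E t := fun t ht => by
    have := energy_deriv_le (u' := u' t) (v' := v' t) hm (by positivity) (hf t ht) (hg t ht)
    exact this.trans_eq (by simp only [E]; ring)
  set B₀ := E 0 * exp (2 * C / m / ν)
  refine ⟨√(2 * B₀) / m, by positivity, fun x hx => ?_⟩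
  have hEx : E x ≤ B₀ * exp (2 * m * x) :=
    le_mul_exp_of_hasDerivAt_le (by positivity) hν (by positivity) hE hE' hx
  have hsq : (m * (|u x| + |v x|)) ^ 2 ≤ (√(2 * B₀) * exp (m * x)) ^ 2 := by
    calc (m * (|u x| + |v x|)) ^ 2 ≤ 2 * E x := by
          nlinarith [sq_nonneg (|u x| - |v x|), sq_abs (u x), sq_abs (v x), sq_nonneg (u' x),
            sq_nonneg (v' x), sq_nonneg m]
      _ ≤ 2 * (B₀ * exp (2 * m * x)) := by gcongr
      _ = (√(2 * B₀) * exp (m * x)) ^ 2 := by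
          rw [mul_pow, sq_sqrt (by positivity), ← exp_nat_mul]; ring_nf
  rw [div_mul_eq_mul_div, le_div_iff₀ hm, mul_comm]
  exact abs_le_of_sq_le_sq' hsq (by positivity) |>.2

theorem exists_affine_approx_of_deriv_deriv {ν A : ℝ} (hν : 0 < ν) {v v' g : ℝ → ℝ}
    (hv : ∀ x, HasDerivAt v (v' x) x) (hv' : ∀ x, HasDerivAt v' (g x) x)
    (hg : ∀ x, 0 ≤ x → |g x| ≤ A * exp (-(ν * x))) :
    ∃ d₀ d₁, ∀ x, 0 ≤ x → |v x - d₀ - d₁ * x| ≤ A / ν / ν * exp (-(ν * x)) := by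
  obtain ⟨d₁, hd₁⟩ := exists_abs_sub_le_of_abs_deriv_le_exp hν hv' hg
  have hw : ∀ x, HasDerivAt (fun t => v t - d₁ * t) (v' x - d₁) x := fun x =>
    ((hv x).sub ((hasDerivAt_id x).const_mul d₁)).congr_deriv (by simp)
  obtain ⟨d₀, hd₀⟩ := exists_abs_sub_le_of_abs_deriv_le_exp hν hw hd₁
  exact ⟨d₀, d₁, fun x hx => by simpa only [sub_right_comm] using hd₀ x hx⟩

theorem exists_exp_approx_of_deriv_deriv {m A δ : ℝ} (hm : 0 < m) (hδ : 0 < δ)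
    {u u' f : ℝ → ℝ} (hu : ∀ x, HasDerivAt u (u' x) x)
    (hu' : ∀ x, HasDerivAt u' (m ^ 2 * u x + f x) x)
    (hf : ∀ x, 0 ≤ x → |f x| ≤ A * exp (-((m + δ) * x))) :
    ∃ c C', ∀ x, 0 ≤ x → |u x - c * exp (m * x)| ≤ C' * exp (-(m * x)) := by
  have hA : 0 ≤ A := by simpa using (abs_nonneg _).trans (hf 0 le_rfl)
  have hexp : ∀ t, exp (m * t) * exp (-(m * t)) = 1 := fun t => by rw [← exp_add]; simp
  set a : ℝ → ℝ := fun t => exp (-(m * t)) * (u' t + m * u t)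
  have ha : ∀ t, HasDerivAt a (exp (-(m * t)) * f t) t := fun t =>
    ((hasDerivAt_exp_neg_mul m t).mul ((hu' t).fun_add ((hu t).const_mul m))).congr_deriv (by ring)
  obtain ⟨α, hα⟩ := exists_abs_sub_le_of_abs_deriv_le_exp (by positivity : 0 < 2 * m + δ) ha
    fun t ht => by
      rw [abs_mul, abs_of_pos (exp_pos _)]
      calc exp (-(m * t)) * |f t| ≤ exp (-(m * t)) * (A * exp (-((m + δ) * t))) := by
            gcongr; exact hf t ht
        _ = A * exp (-((2 * m + δ) * t)) := by rw [mul_left_comm, ← exp_add]; ring_nf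
  set c := α / (2 * m)
  set b : ℝ → ℝ := fun t => exp (m * t) * (u t - c * exp (m * t))
  have hb : ∀ t, HasDerivAt b (exp (m * t) * exp (m * t) * (a t - α)) t := fun t => by
    refine ((hasDerivAt_exp_mul m t).mul ((hu t).fun_sub ((hasDerivAt_exp_mul m t).const_mul c)))
      |>.congr_deriv ?_
    have hc : 2 * m * c = α := by simp only [c]; field_simp
    simp only [a]
    linear_combination -(exp (m * t) * (u' t + m * u t)) * hexp t - exp (m * t) ^ 2 * hc
  obtain ⟨β, hβ⟩ := exists_abs_sub_le_of_abs_deriv_le_exp hδ hb fun t ht => by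
    rw [abs_mul, abs_of_pos (by positivity)]
    calc exp (m * t) * exp (m * t) * |a t - α|
        ≤ exp (m * t) * exp (m * t) * (A / (2 * m + δ) * exp (-((2 * m + δ) * t))) := by
          gcongr; exact hα t ht
      _ = A / (2 * m + δ) * exp (-(δ * t)) := by
          rw [mul_left_comm, ← exp_add, ← exp_add]; ring_nf
  refine ⟨c, |β| + A / (2 * m + δ) / δ, fun x hx => ?_⟩
  have hux : u x - c * exp (m * x) = exp (-(m * x)) * b x := by
    simp only [b]; rw [← mul_assoc, mul_comm (exp _), hexp, one_mul]
  have hbx : |b x| ≤ |β| + A / (2 * m + δ) / δ := by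
    have := (hβ x hx).trans (mul_le_of_le_one_right (by positivity)
      (exp_le_one_iff.2 (by nlinarith)))
    linarith [abs_sub_abs_le_abs_sub (b x) β]
  rw [hux, abs_mul, abs_of_pos (exp_pos _), mul_comm]
  gcongr

end OdeAsymptotics

open OdeAsymptotics

theorem ode_asymptotics_general (m : ℝ) (hm : 0 < m) (P₁ P₂ P₃ P₄ : ℝ → ℝ)
    (C δ : ℝ) (hC : 0 < C) (hδ : 0 < δ)
    (hbound : ∀ x : ℝ, 0 ≤ x →
      |P₁ x| ≤ C * Real.exp (-((2 * m + δ) * x)) ∧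
      |P₂ x| ≤ C * Real.exp (-((2 * m + δ) * x)) ∧
      |P₃ x| ≤ C * Real.exp (-((2 * m + δ) * x)) ∧
      |P₄ x| ≤ C * Real.exp (-((2 * m + δ) * x)))
    (u v : ℝ → ℝ) (hu : ContDiff ℝ 2 u) (hv : ContDiff ℝ 2 v)
    (hequ : ∀ x : ℝ, -(deriv (deriv u) x) + m ^ 2 * u x + P₁ x * u x + P₂ x * v x = 0)
    (heqv : ∀ x : ℝ, -(deriv (deriv v) x) + P₃ x * u x + P₄ x * v x = 0) :
    ∃ c d₀ d₁ C' : ℝ, 0 < C' ∧ ∀ x : ℝ, 0 ≤ x →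
      |u x - c * Real.exp (m * x)| ≤ C' * Real.exp (-(m * x)) ∧
      |v x - d₀ - d₁ * x| ≤ C' * Real.exp (-(m * x)) := by
  have hu₁ : ∀ x, HasDerivAt u (deriv u x) x := fun x =>
    (hu.differentiable two_ne_zero x).hasDerivAt
  have hv₁ : ∀ x, HasDerivAt v (deriv v x) x := fun x =>
    (hv.differentiable two_ne_zero x).hasDerivAt
  have hu₂ : ∀ x, HasDerivAt (deriv u) (m ^ 2 * u x + (P₁ x * u x + P₂ x * v x)) x := fun x =>
    (hu.differentiable_deriv_two x).hasDerivAt.congr_deriv (by linarith [hequ x])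
  have hv₂ : ∀ x, HasDerivAt (deriv v) (P₃ x * u x + P₄ x * v x) x := fun x =>
    (hv.differentiable_deriv_two x).hasDerivAt.congr_deriv (by linarith [heqv x])
  have hf : ∀ x, 0 ≤ x → |P₁ x * u x + P₂ x * v x| ≤
      C * exp (-((2 * m + δ) * x)) * (|u x| + |v x|) := fun x hx =>
    abs_mul_add_mul_le (hbound x hx).1 (hbound x hx).2.1
  have hg : ∀ x, 0 ≤ x → |P₃ x * u x + P₄ x * v x| ≤
      C * exp (-((2 * m + δ) * x)) * (|u x| + |v x|) := fun x hx =>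
    abs_mul_add_mul_le (hbound x hx).2.2.1 (hbound x hx).2.2.2
  obtain ⟨B, hB, hgrowth⟩ :=
    exists_abs_add_abs_le_mul_exp hm hC.le (by positivity) hu₁ hu₂ hv₁ hv₂ hf hg
  have hdecay : ∀ x, 0 ≤ x →
      C * exp (-((2 * m + δ) * x)) * (|u x| + |v x|) ≤ C * B * exp (-((m + δ) * x)) :=
    fun x hx => calc
      _ ≤ C * exp (-((2 * m + δ) * x)) * (B * exp (m * x)) := by gcongr; exact hgrowth x hx
      _ = C * B * exp (-((m + δ) * x)) := by
        rw [mul_mul_mul_comm, ← exp_add]; ring_nf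
  obtain ⟨c, C₁, hc⟩ := exists_exp_approx_of_deriv_deriv hm hδ hu₁ hu₂
    fun x hx => (hf x hx).trans (hdecay x hx)
  obtain ⟨d₀, d₁, hd⟩ := exists_affine_approx_of_deriv_deriv (by positivity) hv₁ hv₂
    fun x hx => (hg x hx).trans (hdecay x hx)
  set C₂ := C * B / (m + δ) / (m + δ)
  refine ⟨c, d₀, d₁, max (max C₁ C₂) 1, lt_max_of_lt_right one_pos, fun x hx => ⟨?_, ?_⟩⟩
  · exact (hc x hx).trans (by gcongr; exact (le_max_left _ _).trans (le_max_left _ _))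
  · refine (hd x hx).trans (mul_le_mul ?_ (exp_le_exp.2 (by nlinarith)) (exp_pos _).le ?_)
    · exact (le_max_right _ _).trans (le_max_left _ _)
    · exact le_max_of_le_right zero_le_one

/-- ODE asymptotics for a coupled linear system on the half-line: if `−u'' + m²u + P₁u + P₂v = 0`
and `−v'' + P₃u + P₄v = 0` with continuous potentials `Pⱼ` satisfying
`|Pⱼ(x)| ≤ C e^{−(2m+δ)x}` for `x ≥ 0`, then for some constants `c, d₀, d₁` and `C' > 0`,
`|u(x) − c e^{mx}| ≤ C' e^{−mx}` and `|v(x) − d₀ − d₁x| ≤ C' e^{−mx}` for all `x ≥ 0`. -/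
theorem ode_asymptotics (m : ℝ) (hm : 0 < m) (P₁ P₂ P₃ P₄ : ℝ → ℝ)
    (hP₁ : Continuous P₁) (hP₂ : Continuous P₂) (hP₃ : Continuous P₃) (hP₄ : Continuous P₄)
    (C δ : ℝ) (hC : 0 < C) (hδ : 0 < δ)
    (hbound : ∀ x : ℝ, 0 ≤ x →
      |P₁ x| ≤ C * Real.exp (-((2 * m + δ) * x)) ∧
      |P₂ x| ≤ C * Real.exp (-((2 * m + δ) * x)) ∧
      |P₃ x| ≤ C * Real.exp (-((2 * m + δ) * x)) ∧
      |P₄ x| ≤ C * Real.exp (-((2 * m + δ) * x)))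
    (u v : ℝ → ℝ) (hu : ContDiff ℝ 2 u) (hv : ContDiff ℝ 2 v)
    (hequ : ∀ x : ℝ, -(deriv (deriv u) x) + m ^ 2 * u x + P₁ x * u x + P₂ x * v x = 0)
    (heqv : ∀ x : ℝ, -(deriv (deriv v) x) + P₃ x * u x + P₄ x * v x = 0) :
    ∃ c d₀ d₁ C' : ℝ, 0 < C' ∧ ∀ x : ℝ, 0 ≤ x →
      |u x - c * Real.exp (m * x)| ≤ C' * Real.exp (-(m * x)) ∧
      |v x - d₀ - d₁ * x| ≤ C' * Real.exp (-(m * x)) :=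
  ode_asymptotics_general m hm P₁ P₂ P₃ P₄ C δ hC hδ hbound u v hu hv hequ heqv
end
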